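/- arXiv:0801.2846 — 4 statements merged into one kernel-verified Lean document; each statement's English description precedes it below -/
import Mathlib

section
/- Let B be a commutative ring, A a B-algebra, C a B-algebra with an ideal I satisfying I² = 0, and u₀ : A → C/I a B-algebra homomorphism. If the set of B-algebra homomorphisms A → C lifting u₀ is nonempty, then it is a torsor (principal homogeneous space) under the group Der_B(A, I) of B-derivations from A into I, where I is an A-module via any chosen lifting. Equivalently, it is a torsor under Hom_A(Ω¹_{A/B}, I). -/
/-- A function `d : A → C` is a `B`-derivation of `A` with values in the ideal `I ⊆ C`,
where `I` is regarded as an `A`-module via the algebra map `u : A → C`. -/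
def IsSqZeroDerivation {B A C : Type*} [CommRing B] [CommRing A] [CommRing C]
    [Algebra B A] [Algebra B C] (I : Ideal C) (u : A →ₐ[B] C) (d : A → C) : Prop :=
  (∀ a : A, d a ∈ I) ∧
  (∀ a₁ a₂ : A, d (a₁ + a₂) = d a₁ + d a₂) ∧
  (∀ b : B, d (algebraMap B A b) = 0) ∧
  (∀ a₁ a₂ : A, d (a₁ * a₂) = u a₁ * d a₂ + u a₂ * d a₁)

lemma sq_zero_mul {C : Type*} [CommRing C] {I : Ideal C} (hI : I ^ 2 = ⊥)
    {x y : C} (hx : x ∈ I) (hy : y ∈ I) : x * y = 0 := by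
  have : x * y ∈ I ^ 2 := by
    rw [pow_two]; exact Ideal.mul_mem_mul hx hy
  rw [hI] at this
  simpa using this

/-- If the set of `B`-algebra homomorphisms `A → C` lifting
`u₀ : A → C/I` (with `I² = 0`) is nonempty, then it is a torsor under the group of
`B`-derivations `A → I`: fixing a lifting `u`, every lifting `v` differs from `u` by a
unique derivation, and adding any derivation to `u` produces a lifting. -/
theorem liftings_torsor_under_derivations
    {B A C : Type*} [CommRing B] [CommRing A] [CommRing C]
    [Algebra B A] [Algebra B C] (I : Ideal C) (hI : I ^ 2 = ⊥)
    (u₀ : A →ₐ[B] C ⧸ I)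
    (hne : ∃ u : A →ₐ[B] C, (Ideal.Quotient.mkₐ B I).comp u = u₀) :
    ∀ u : A →ₐ[B] C, (Ideal.Quotient.mkₐ B I).comp u = u₀ →
      (∀ v : A →ₐ[B] C, (Ideal.Quotient.mkₐ B I).comp v = u₀ →
        ∃! d : A → C, IsSqZeroDerivation I u d ∧ ∀ a : A, v a = u a + d a) ∧
      (∀ d : A → C, IsSqZeroDerivation I u d →
        ∃ v : A →ₐ[B] C, (Ideal.Quotient.mkₐ B I).comp v = u₀ ∧
          ∀ a : A, v a = u a + d a) := by
  intro u hu
  constructor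
  · intro v hv
    refine ⟨fun a => v a - u a, ⟨⟨?_, ?_, ?_, ?_⟩, fun a => by ring⟩, ?_⟩
    · intro a
      rw [← Ideal.Quotient.eq_zero_iff_mem]
      have h1 : Ideal.Quotient.mk I (v a) = u₀ a := by
        rw [← hv]; rfl
      have h2 : Ideal.Quotient.mk I (u a) = u₀ a := by
        rw [← hu]; rfl
      rw [map_sub, h1, h2, sub_self]
    · intro a₁ a₂; show v (a₁+a₂) - u (a₁+a₂) = _; rw [map_add, map_add]; ring
    · intro b; show v (algebraMap B A b) - u (algebraMap B A b) = 0
      rw [AlgHom.commutes, AlgHom.commutes, sub_self]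
    · intro a₁ a₂
      have hd : ∀ a : A, v a - u a ∈ I := by
        intro a
        rw [← Ideal.Quotient.eq_zero_iff_mem]
        have h1 : Ideal.Quotient.mk I (v a) = u₀ a := by rw [← hv]; rfl
        have h2 : Ideal.Quotient.mk I (u a) = u₀ a := by rw [← hu]; rfl
        rw [map_sub, h1, h2, sub_self]
      have hz : (v a₁ - u a₁) * (v a₂ - u a₂) = 0 :=
        sq_zero_mul hI (hd a₁) (hd a₂)
      show v (a₁*a₂) - u (a₁*a₂) = _
      rw [map_mul, map_mul]
      linear_combination hz
    · rintro d ⟨_, hd⟩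
      funext a
      show d a = v a - u a
      linear_combination -(hd a)
  · intro d hd
    obtain ⟨hdI, hadd, halg, hmul⟩ := hd
    have h1 : d 1 = 0 := by
      have := halg 1
      simpa using this
    have h0 : d 0 = 0 := by
      have := hadd 0 0
      simpa using this
    refine ⟨{ toFun := fun a => u a + d a,
              map_one' := by simp [h1],
              map_mul' := fun a₁ a₂ => by
                have hz : d a₁ * d a₂ = 0 := sq_zero_mul hI (hdI a₁) (hdI a₂)
                show u (a₁*a₂) + d (a₁*a₂) = (u a₁ + d a₁) * (u a₂ + d a₂)
                rw [map_mul, hmul a₁ a₂]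
                linear_combination -hz,
              map_zero' := by simp [h0],
              map_add' := fun a₁ a₂ => by simp only [map_add, hadd]; ring,
              commutes' := fun b => by simp [halg b] }, ?_, fun a => rfl⟩
    ext a
    have h2 : Ideal.Quotient.mk I (u a) = u₀ a := by rw [← hu]; rfl
    show Ideal.Quotient.mk I (u a + d a) = u₀ a
    rw [map_add, h2, Ideal.Quotient.eq_zero_iff_mem.2 (hdI a), add_zero]
end

section
/- Let B be a commutative ring with square-zero ideal J, B₀ = B/J, and let A, A' be two flat B-algebras equipped with B₀-algebra isomorphisms A/JA ≅ A₀ ≅ A'/JA' for a fixed formally smooth B₀-algebra A₀. If g, g' : A → A' are two B-algebra isomorphisms compatible with the identifications modulo J, then g' − g = φ ∘ d : A → JA' for a unique A₀-linear map φ : Ω¹_{A₀/B₀} → J ⊗_{B₀} A₀, where d is the composite of the projection A → A₀ with the universal derivation d_{A₀/B₀}, and where J ⊗_{B₀} A₀ is identified with JA'. Conversely, for every such φ, g + φ ∘ d is another B-algebra isomorphism A → A' compatible with the identifications modulo J. Hence the set of such isomorphisms, if nonempty, is a torsor under Hom_{A₀}(Ω¹_{A₀/B₀}, J ⊗_{B₀}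 A₀). -/
universe u

section Aux

variable {B : Type*} {B₀ A₀ : Type u} {A A' : Type*}
variable [CommRing B] [CommRing B₀] [CommRing A₀] [CommRing A] [CommRing A']
variable [Algebra B B₀] [Algebra B₀ A₀] [Algebra B A₀] [IsScalarTower B B₀ A₀]
variable [Algebra B A] [Algebra B A']

private lemma sqz (J : Ideal B) (hJ : J ^ 2 = ⊥) {m n : A'}
    (hm : m ∈ J.map (algebraMap B A')) (hn : n ∈ J.map (algebraMap B A')) : m * n = 0 := by
  have h := Ideal.mul_mem_mul hm hn
  rwa [← Ideal.map_mul, ← pow_two, hJ, Ideal.map_bot, Ideal.mem_bot] at h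

private lemma part2
    (J : Ideal B) (hJ : J ^ 2 = ⊥)
    (e : (A ⧸ J.map (algebraMap B A)) ≃ₐ[B] A₀)
    (e' : (A' ⧸ J.map (algebraMap B A')) ≃ₐ[B] A₀)
    (g : A ≃ₐ[B] A')
    (hg : ∀ x : A, e' (Ideal.Quotient.mk (J.map (algebraMap B A')) (g x))
          = e (Ideal.Quotient.mk (J.map (algebraMap B A)) x))
    (φ : KaehlerDifferential B₀ A₀ →+ A')
    (h1 : ∀ ω, φ ω ∈ J.map (algebraMap B A'))
    (h2 : ∀ (x : A) (ω), φ (e (Ideal.Quotient.mk (J.map (algebraMap B A)) x) • ω)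
            = g x * φ ω) :
    ∃ g' : A ≃ₐ[B] A',
      (∀ x : A, e' (Ideal.Quotient.mk (J.map (algebraMap B A')) (g' x))
          = e (Ideal.Quotient.mk (J.map (algebraMap B A)) x)) ∧
      (∀ x : A, g' x = g x
          + φ (KaehlerDifferential.D B₀ A₀
              (e (Ideal.Quotient.mk (J.map (algebraMap B A)) x)))) := by
  classical
  let π : A →+* A₀ := (e : (A ⧸ J.map (algebraMap B A)) ≃ₐ[B] A₀).toAlgHom.toRingHom.comp
    (Ideal.Quotient.mk (J.map (algebraMap B A)))
  have hπ : ∀ x : A, π x = e (Ideal.Quotient.mk (J.map (algebraMap B A)) x) := fun _ => rfl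
  have hπalg : ∀ b : B, π (algebraMap B A b) = algebraMap B A₀ b := by
    intro b
    rw [hπ, Ideal.Quotient.mk_algebraMap, AlgEquiv.commutes]
  let Dm : A → A' := fun x => φ (KaehlerDifferential.D B₀ A₀ (π x))
  have hDm : ∀ x : A,
      Dm x = φ (KaehlerDifferential.D B₀ A₀
        (e (Ideal.Quotient.mk (J.map (algebraMap B A)) x))) := fun _ => rfl
  have hDmem : ∀ x, Dm x ∈ J.map (algebraMap B A') := fun x => h1 _
  have h2' : ∀ (x : A) (ω), φ ((π x) • ω) = g x * φ ω := fun x ω => h2 x ω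
  have hDadd : ∀ x y, Dm (x + y) = Dm x + Dm y := by
    intro x y
    show φ (KaehlerDifferential.D B₀ A₀ (π (x + y))) = _
    rw [map_add π, map_add, map_add]
  have hDsub : ∀ x y, Dm (x - y) = Dm x - Dm y := by
    intro x y
    show φ (KaehlerDifferential.D B₀ A₀ (π (x - y))) = _
    rw [map_sub π, map_sub, map_sub]
  have hDmul : ∀ x y : A, Dm (x * y) = g x * Dm y + g y * Dm x := by
    intro x y
    show φ (KaehlerDifferential.D B₀ A₀ (π (x * y))) = _
    rw [map_mul π, Derivation.leibniz, map_add, h2', h2']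
  have halg : ∀ b : B, Dm (algebraMap B A b) = 0 := by
    intro b
    show φ (KaehlerDifferential.D B₀ A₀ (π (algebraMap B A b))) = 0
    rw [hπalg, IsScalarTower.algebraMap_apply B B₀ A₀, Derivation.map_algebraMap, map_zero]
  have hD1 : Dm 1 = 0 := by
    show φ (KaehlerDifferential.D B₀ A₀ (π 1)) = 0
    rw [map_one π, Derivation.map_one_eq_zero, map_zero]
  have hD0 : ∀ x : A, g x ∈ J.map (algebraMap B A') → Dm x = 0 := by
    intro x hx
    have h0 : e (Ideal.Quotient.mk (J.map (algebraMap B A)) x) = 0 := by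
      rw [← hg x, Ideal.Quotient.eq_zero_iff_mem.mpr hx, map_zero]
    show φ (KaehlerDifferential.D B₀ A₀ (π x)) = 0
    rw [hπ, h0, map_zero, map_zero]
  let h : A →ₐ[B] A' :=
  { toFun := fun x => g x + Dm x
    map_one' := by
      show g 1 + Dm 1 = 1
      rw [map_one, hD1, add_zero]
    map_mul' := by
      intro x y
      have hz := sqz J hJ (hDmem x) (hDmem y)
      show g (x * y) + Dm (x * y) = (g x + Dm x) * (g y + Dm y)
      rw [map_mul, hDmul]
      linear_combination -hz
    map_zero' := by
      show g 0 + Dm 0 = 0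
      have : Dm 0 = 0 := hD0 0 (by rw [map_zero]; exact zero_mem _)
      rw [map_zero, this, add_zero]
    map_add' := by
      intro x y
      show g (x + y) + Dm (x + y) = (g x + Dm x) + (g y + Dm y)
      rw [map_add, hDadd]; ring
    commutes' := by
      intro b
      show g (algebraMap B A b) + Dm (algebraMap B A b) = algebraMap B A' b
      rw [halg, add_zero, AlgEquiv.commutes] }
  have hhx : ∀ x : A, h x = g x + Dm x := fun _ => rfl
  have hker0 : ∀ x : A, h x = 0 → x = 0 := by
    intro x hx
    rw [hhx] at hx
    have hgx : g x ∈ J.map (algebraMap B A') := by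
      have hgneg : g x = -Dm x := by linear_combination hx
      rw [hgneg]; exact neg_mem (hDmem x)
    have hDx : Dm x = 0 := hD0 x hgx
    have hx0 : g x = 0 := by rwa [hDx, add_zero] at hx
    calc x = g.symm (g x) := (g.symm_apply_apply x).symm
    _ = 0 := by rw [hx0, map_zero]
  have hinj : Function.Injective h := by
    intro x y hxy
    have := hker0 (x - y) (by rw [map_sub, hxy, sub_self])
    exact sub_eq_zero.mp this
  have hsurjh : Function.Surjective h := by
    intro y
    refine ⟨g.symm (y - Dm (g.symm y)), ?_⟩
    have key : Dm (g.symm (Dm (g.symm y))) = 0 :=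
      hD0 _ (by rw [g.apply_symm_apply]; exact hDmem _)
    rw [hhx, g.apply_symm_apply]
    have hsplit : g.symm (y - Dm (g.symm y))
        = g.symm y - g.symm (Dm (g.symm y)) := map_sub _ _ _
    rw [hsplit, hDsub, key, sub_zero]
    ring
  refine ⟨AlgEquiv.ofBijective h ⟨hinj, hsurjh⟩, ?_, ?_⟩
  · intro x
    show e' (Ideal.Quotient.mk (J.map (algebraMap B A')) (h x))
        = e (Ideal.Quotient.mk (J.map (algebraMap B A)) x)
    have hmk : Ideal.Quotient.mk (J.map (algebraMap B A')) (h x)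
        = Ideal.Quotient.mk (J.map (algebraMap B A')) (g x) := by
      rw [hhx, map_add, Ideal.Quotient.eq_zero_iff_mem.mpr (hDmem x), add_zero]
    rw [hmk, hg x]
  · intro x
    show h x = g x + φ (KaehlerDifferential.D B₀ A₀
        (e (Ideal.Quotient.mk (J.map (algebraMap B A)) x)))
    rw [hhx, ← hDm]

private lemma part1
    (J : Ideal B) (hJ : J ^ 2 = ⊥)
    (hsurj : Function.Surjective (algebraMap B B₀))
    (e : (A ⧸ J.map (algebraMap B A)) ≃ₐ[B] A₀)
    (e' : (A' ⧸ J.map (algebraMap B A')) ≃ₐ[B] A₀)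
    (g g' : A ≃ₐ[B] A')
    (hg : ∀ x : A, e' (Ideal.Quotient.mk (J.map (algebraMap B A')) (g x))
          = e (Ideal.Quotient.mk (J.map (algebraMap B A)) x))
    (hg' : ∀ x : A, e' (Ideal.Quotient.mk (J.map (algebraMap B A')) (g' x))
          = e (Ideal.Quotient.mk (J.map (algebraMap B A)) x)) :
    ∃! φ : KaehlerDifferential B₀ A₀ →+ A',
      (∀ ω, φ ω ∈ J.map (algebraMap B A')) ∧
      (∀ (x : A) (ω), φ (e (Ideal.Quotient.mk (J.map (algebraMap B A)) x) • ω)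
          = g x * φ ω) ∧
      (∀ x : A, g' x - g x
          = φ (KaehlerDifferential.D B₀ A₀
              (e (Ideal.Quotient.mk (J.map (algebraMap B A)) x)))) := by
  classical
  let π : A →+* A₀ := (e : (A ⧸ J.map (algebraMap B A)) ≃ₐ[B] A₀).toAlgHom.toRingHom.comp
    (Ideal.Quotient.mk (J.map (algebraMap B A)))
  have hπ : ∀ x : A, π x = e (Ideal.Quotient.mk (J.map (algebraMap B A)) x) := fun _ => rfl
  have hπalg : ∀ b : B, π (algebraMap B A b) = algebraMap B A₀ b := by
    intro b
    rw [hπ, Ideal.Quotient.mk_algebraMap, AlgEquiv.commutes]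
  have hπsurj : Function.Surjective π := by
    intro a
    obtain ⟨q, hq⟩ := e.surjective a
    obtain ⟨x, rfl⟩ := Ideal.Quotient.mk_surjective q
    exact ⟨x, hq⟩
  have hmul0 : ∀ {m n : A'}, m ∈ J.map (algebraMap B A') → n ∈ J.map (algebraMap B A') →
      m * n = 0 := fun hm hn => sqz J hJ hm hn
  have hdmem : ∀ x : A, g' x - g x ∈ J.map (algebraMap B A') := by
    intro x
    have h : Ideal.Quotient.mk (J.map (algebraMap B A')) (g' x)
        = Ideal.Quotient.mk (J.map (algebraMap B A')) (g x) :=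
      e'.injective (by rw [hg x, hg' x])
    exact Ideal.Quotient.eq.mp h
  -- `g` maps `JA` into `JA'`
  have hgI : ∀ x ∈ J.map (algebraMap B A), g x ∈ J.map (algebraMap B A') := by
    intro x hx
    have hmap : (J.map (algebraMap B A)).map (g.toAlgHom.toRingHom : A →+* A')
        = J.map (algebraMap B A') := by
      rw [Ideal.map_map]
      congr 1
      ext b
      simp
    rw [← hmap]
    exact Ideal.mem_map_of_mem _ hx
  -- `g' = g` on `JA`
  have hvanish : ∀ x ∈ J.map (algebraMap B A), g' x = g x := by
    intro x hx
    have hx' : x ∈ Ideal.span ((algebraMap B A) '' (J : Set B)) := hx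
    refine Submodule.span_induction ?_ ?_ ?_ ?_ hx'
    · rintro _ ⟨b, hb, rfl⟩
      rw [AlgEquiv.commutes, AlgEquiv.commutes]
    · rw [map_zero, map_zero]
    · intro u v hu hv hpu hpv
      rw [map_add, map_add, hpu, hpv]
    · intro a y hymem hpy
      have hgy : g y ∈ J.map (algebraMap B A') := hgI y hymem
      rw [smul_eq_mul, map_mul, map_mul, hpy]
      linear_combination hmul0 (hdmem a) hgy
  have hdiffI : ∀ u x : A, u - x ∈ J.map (algebraMap B A) → g' u - g u = g' x - g x := by
    intro u x hux
    have h := hvanish _ hux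
    rw [map_sub, map_sub] at h
    linear_combination h
  -- the square-zero ideal `I' = JA'` and its cotangent module
  have hsqbot : (J.map (algebraMap B A')) ^ 2 = ⊥ := by
    rw [← Ideal.map_pow, hJ, Ideal.map_bot]
  have hcotinj : Function.Injective (J.map (algebraMap B A')).toCotangent := by
    intro m n hmn
    have h := (Ideal.toCotangent_eq (I := J.map (algebraMap B A'))).mp hmn
    rw [hsqbot, Ideal.mem_bot, sub_eq_zero] at h
    exact Subtype.ext h
  let f₀ : A₀ →+* (A' ⧸ J.map (algebraMap B A')) :=
    (e'.symm : A₀ ≃ₐ[B] (A' ⧸ J.map (algebraMap B A'))).toAlgHom.toRingHom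
  letI instA₀ : Module A₀ (J.map (algebraMap B A')).Cotangent := Module.compHom _ f₀
  letI instB₀ : Module B₀ (J.map (algebraMap B A')).Cotangent :=
    Module.compHom _ (f₀.comp (algebraMap B₀ A₀))
  haveI instTower : IsScalarTower B₀ A₀ (J.map (algebraMap B A')).Cotangent := by
    constructor
    intro b a m
    show f₀ (b • a) • m = f₀ (algebraMap B₀ A₀ b) • (f₀ a • m)
    rw [Algebra.smul_def, map_mul, mul_smul]
  have hf₀ : ∀ x : A, f₀ (π x) = Ideal.Quotient.mk (J.map (algebraMap B A')) (g x) := by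
    intro x
    show e'.symm (e (Ideal.Quotient.mk (J.map (algebraMap B A)) x)) = _
    rw [← hg x, AlgEquiv.symm_apply_apply]
  have hmk_smul : ∀ (y : A') (m : ↥(J.map (algebraMap B A'))),
      (Ideal.Quotient.mk (J.map (algebraMap B A')) y) • (J.map (algebraMap B A')).toCotangent m
        = (J.map (algebraMap B A')).toCotangent
            ⟨y * ↑m, Ideal.mul_mem_left _ y m.2⟩ := fun y m => rfl
  have hsmulM : ∀ (x : A) (m : ↥(J.map (algebraMap B A'))),
      (π x) • (J.map (algebraMap B A')).toCotangent m
        = (J.map (algebraMap B A')).toCotangent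
            ⟨g x * ↑m, Ideal.mul_mem_left _ (g x) m.2⟩ := by
    intro x m
    show f₀ (π x) • (J.map (algebraMap B A')).toCotangent m = _
    rw [hf₀]
    exact hmk_smul _ _
  have hB₀smul : ∀ (b : B) (m : (J.map (algebraMap B A')).Cotangent),
      (algebraMap B B₀ b) • m
        = (Ideal.Quotient.mk (J.map (algebraMap B A')) (algebraMap B A' b)) • m := by
    intro b m
    show f₀ (algebraMap B₀ A₀ (algebraMap B B₀ b)) • m = _
    rw [← IsScalarTower.algebraMap_apply]
    show e'.symm (algebraMap B A₀ b) • m = _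
    rw [AlgEquiv.commutes, Ideal.Quotient.mk_algebraMap]
  -- the section and the difference map
  let σ : A₀ → A := Function.surjInv hπsurj
  have hσ : ∀ a : A₀, π (σ a) = a := fun a => Function.surjInv_eq hπsurj a
  let D₀fun : A₀ → (J.map (algebraMap B A')).Cotangent := fun a =>
    (J.map (algebraMap B A')).toCotangent ⟨g' (σ a) - g (σ a), hdmem _⟩
  have hkey : ∀ x : A, D₀fun (π x)
      = (J.map (algebraMap B A')).toCotangent ⟨g' x - g x, hdmem x⟩ := by
    intro x
    have hmem : σ (π x) - x ∈ J.map (algebraMap B A) := by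
      refine Ideal.Quotient.eq.mp (e.injective ?_)
      show e (Ideal.Quotient.mk _ (σ (π x))) = e (Ideal.Quotient.mk _ x)
      rw [← hπ, ← hπ, hσ]
    exact congrArg _ (Subtype.ext (hdiffI _ _ hmem))
  let D₀ : Derivation B₀ A₀ (J.map (algebraMap B A')).Cotangent :=
  { toFun := D₀fun
    map_add' := by
      intro a b
      obtain ⟨x, rfl⟩ := hπsurj a
      obtain ⟨y, rfl⟩ := hπsurj b
      rw [← map_add π, hkey, hkey, hkey, ← map_add]
      apply congrArg
      apply Subtype.ext
      show g' (x + y) - g (x + y) = (g' x - g x) + (g' y - g y)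
      rw [map_add, map_add]; ring
    map_smul' := by
      intro b₀ a
      obtain ⟨b, rfl⟩ := hsurj b₀
      obtain ⟨x, rfl⟩ := hπsurj a
      have hsm : (algebraMap B B₀ b) • π x = π (algebraMap B A b * x) := by
        rw [Algebra.smul_def, ← IsScalarTower.algebraMap_apply, map_mul, hπalg]
      show D₀fun ((algebraMap B B₀ b) • π x) = (algebraMap B B₀ b) • D₀fun (π x)
      rw [hsm, hkey, hkey, hB₀smul, hmk_smul]
      apply congrArg
      apply Subtype.ext
      show g' (algebraMap B A b * x) - g (algebraMap B A b * x)
          = algebraMap B A' b * (g' x - g x)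
      rw [map_mul, map_mul, AlgEquiv.commutes, AlgEquiv.commutes]; ring
    map_one_eq_zero' := by
      show D₀fun 1 = 0
      rw [← map_one π, hkey]
      have h0 : (⟨g' 1 - g 1, hdmem 1⟩ : ↥(J.map (algebraMap B A'))) = 0 := by
        apply Subtype.ext
        show g' 1 - g 1 = 0
        rw [map_one, map_one, sub_self]
      rw [h0, map_zero]
    leibniz' := by
      intro a b
      obtain ⟨x, rfl⟩ := hπsurj a
      obtain ⟨y, rfl⟩ := hπsurj b
      show D₀fun (π x * π y) = π x • D₀fun (π y) + π y • D₀fun (π x)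
      rw [← map_mul π, hkey, hkey, hkey, hsmulM, hsmulM, ← map_add]
      apply congrArg
      apply Subtype.ext
      show g' (x * y) - g (x * y) = g x * (g' y - g y) + g y * (g' x - g x)
      rw [map_mul, map_mul]
      linear_combination hmul0 (hdmem x) (hdmem y)
  }
  have hkeyD : ∀ x : A, D₀ (π x)
      = (J.map (algebraMap B A')).toCotangent ⟨g' x - g x, hdmem x⟩ := hkey
  let φ₀ : KaehlerDifferential B₀ A₀ →ₗ[A₀] (J.map (algebraMap B A')).Cotangent :=
    D₀.liftKaehlerDifferential
  -- inverse of `toCotangent`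
  let τ : (J.map (algebraMap B A')).Cotangent → ↥(J.map (algebraMap B A')) :=
    Function.surjInv (Ideal.toCotangent_surjective _)
  have hτ : ∀ m, (J.map (algebraMap B A')).toCotangent (τ m) = m :=
    fun m => Function.surjInv_eq _ m
  have hτ' : ∀ n : ↥(J.map (algebraMap B A')), τ ((J.map (algebraMap B A')).toCotangent n) = n :=
    fun n => hcotinj (hτ _)
  let Φ : KaehlerDifferential B₀ A₀ →+ A' :=
  { toFun := fun ω => ↑(τ (φ₀ ω))
    map_zero' := by
      have h0 : τ 0 = 0 := hcotinj (by rw [hτ, map_zero])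
      show ↑(τ (φ₀ 0)) = (0 : A')
      rw [map_zero, h0]
      rfl
    map_add' := by
      intro ω₁ ω₂
      show ↑(τ (φ₀ (ω₁ + ω₂))) = (↑(τ (φ₀ ω₁)) + ↑(τ (φ₀ ω₂)) : A')
      have : τ (φ₀ (ω₁ + ω₂)) = τ (φ₀ ω₁) + τ (φ₀ ω₂) := by
        apply hcotinj
        rw [hτ, map_add, map_add, hτ, hτ]
      rw [this]
      rfl }
  have hΦ : ∀ ω, Φ ω = ↑(τ (φ₀ ω)) := fun _ => rfl
  have hΦmem : ∀ ω, Φ ω ∈ J.map (algebraMap B A') := fun ω => (τ (φ₀ ω)).2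
  have hΦ2 : ∀ (x : A) (ω), Φ ((π x) • ω) = g x * Φ ω := by
    intro x ω
    rw [hΦ, hΦ]
    conv_lhs => rw [map_smul, ← hτ (φ₀ ω), hsmulM, hτ']
  have hΦ3 : ∀ x : A, Φ (KaehlerDifferential.D B₀ A₀ (π x)) = g' x - g x := by
    intro x
    rw [hΦ, Derivation.liftKaehlerDifferential_comp_D, hkeyD, hτ']
  refine ⟨Φ, ⟨hΦmem, fun x ω => hΦ2 x ω, fun x => (hΦ3 x).symm⟩, ?_⟩
  rintro ψ ⟨hψ1, hψ2, hψ3⟩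
  have hψ2' : ∀ (x : A) (ω), ψ ((π x) • ω) = g x * ψ ω := fun x ω => hψ2 x ω
  have hψ3' : ∀ x : A, ψ (KaehlerDifferential.D B₀ A₀ (π x)) = g' x - g x :=
    fun x => (hψ3 x).symm
  ext ω
  have hω : ω ∈ Submodule.span A₀ (Set.range (KaehlerDifferential.D B₀ A₀)) := by
    rw [KaehlerDifferential.span_range_derivation]; trivial
  show ψ ω = Φ ω
  refine Submodule.span_induction ?_ ?_ ?_ ?_ hω
  · rintro _ ⟨a, rfl⟩
    obtain ⟨x, rfl⟩ := hπsurj a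
    rw [hψ3', hΦ3]
  · rw [map_zero, map_zero]
  · intro u v _ _ hu hv
    rw [map_add, map_add, hu, hv]
  · intro a ω' _ hω'
    obtain ⟨x, rfl⟩ := hπsurj a
    rw [hψ2', hΦ2, hω']

end Aux


/-- Torsor structure on isomorphisms between two liftings: with `J ⊆ B`
square-zero, `B₀ = B/J`, `A₀` a formally smooth `B₀`-algebra, and `A`, `A'` flat `B`-algebras
equipped with identifications `A/JA ≅ A₀ ≅ A'/JA'`, any two compatible `B`-algebra
isomorphisms `g, g' : A ≅ A'` differ by `g' - g = φ ∘ d` for a unique `A₀`-linear map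
`φ : Ω¹_{A₀/B₀} → JA' (≅ J ⊗_{B₀} A₀)`, where `d` is the composite of `A → A₀` with the
universal derivation; conversely every such `φ` modifies `g` into another compatible
isomorphism.  (`A₀`-linearity of `φ` into `JA' ⊆ A'` is expressed by additivity together
with the semilinearity `φ (e (x mod JA) • ω) = g x * φ ω`.) -/
theorem iso_of_liftings_torsor
    {B : Type*} {B₀ A₀ : Type u} {A A' : Type*}
    [CommRing B] [CommRing B₀] [CommRing A₀] [CommRing A] [CommRing A']
    [Algebra B B₀] [Algebra B₀ A₀] [Algebra B A₀] [IsScalarTower B B₀ A₀]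
    [Algebra B A] [Algebra B A']
    (J : Ideal B) (hJ : J ^ 2 = ⊥)
    (hker : RingHom.ker (algebraMap B B₀) = J)
    (hsurj : Function.Surjective (algebraMap B B₀))
    [Module.Flat B A] [Module.Flat B A']
    [Algebra.FormallySmooth B₀ A₀]
    (e : (A ⧸ J.map (algebraMap B A)) ≃ₐ[B] A₀)
    (e' : (A' ⧸ J.map (algebraMap B A')) ≃ₐ[B] A₀) :
    (∀ g g' : A ≃ₐ[B] A',
      (∀ x : A, e' (Ideal.Quotient.mk (J.map (algebraMap B A')) (g x))
          = e (Ideal.Quotient.mk (J.map (algebraMap B A)) x)) →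
      (∀ x : A, e' (Ideal.Quotient.mk (J.map (algebraMap B A')) (g' x))
          = e (Ideal.Quotient.mk (J.map (algebraMap B A)) x)) →
      ∃! φ : KaehlerDifferential B₀ A₀ →+ A',
        (∀ ω, φ ω ∈ J.map (algebraMap B A')) ∧
        (∀ (x : A) (ω), φ (e (Ideal.Quotient.mk (J.map (algebraMap B A)) x) • ω)
            = g x * φ ω) ∧
        (∀ x : A, g' x - g x
            = φ (KaehlerDifferential.D B₀ A₀
                (e (Ideal.Quotient.mk (J.map (algebraMap B A)) x))))) ∧
    (∀ g : A ≃ₐ[B] A',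
      (∀ x : A, e' (Ideal.Quotient.mk (J.map (algebraMap B A')) (g x))
          = e (Ideal.Quotient.mk (J.map (algebraMap B A)) x)) →
      ∀ φ : KaehlerDifferential B₀ A₀ →+ A',
        (∀ ω, φ ω ∈ J.map (algebraMap B A')) →
        (∀ (x : A) (ω), φ (e (Ideal.Quotient.mk (J.map (algebraMap B A)) x) • ω)
            = g x * φ ω) →
        ∃ g' : A ≃ₐ[B] A',
          (∀ x : A, e' (Ideal.Quotient.mk (J.map (algebraMap B A')) (g' x))
              = e (Ideal.Quotient.mk (J.map (algebraMap B A)) x)) ∧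
          (∀ x : A, g' x = g x
              + φ (KaehlerDifferential.D B₀ A₀
                  (e (Ideal.Quotient.mk (J.map (algebraMap B A)) x))))) :=
  ⟨fun g g' hg hg' => part1 J hJ hsurj e e' g g' hg hg',
   fun g hg φ h1 h2 => part2 J hJ e e' g hg φ h1 h2⟩
end

section
/- Let B be a commutative ring with square-zero ideal J, B₀ = B/J, and let A₀ be a formally smooth B₀-algebra. If A and A' are two flat B-algebras together with B₀-algebra isomorphisms A ⊗_B B₀ ≅ A₀ and A' ⊗_B B₀ ≅ A₀ (i.e., two liftings of A₀ over B), then there exists a B-algebra isomorphism g : A → A' reducing to the identity of A₀ modulo J. In other words, liftings of a formally smooth algebra over an affine square-zero extension are unique up to isomorphism. -/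
/-!
Flatness makes both liftings formally smooth over `B` (Stacks 031L), so each reduction map
`A → A₀`, `A' → A₀` lifts through the other along the square-zero ideal `JA'`, resp. `JA`.
The two composites are `B`-algebra endomorphisms reducing to the identity modulo a square-zero
ideal of the form `JX`; such an endomorphism fixes `JX` pointwise and is therefore invertible.
-/

universe u

section

variable {R X : Type*} [CommRing R] [CommRing X] [Algebra R X] {J : Ideal R}

theorem Ideal.mul_eq_zero_of_mem_map_of_sq_eq_bot (hJ : J ^ 2 = ⊥) {m n : X}
    (hm : m ∈ J.map (algebraMap R X)) (hn : n ∈ J.map (algebraMap R X)) : m * n = 0 := by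
  have : m * n ∈ J.map (algebraMap R X) ^ 2 :=
    pow_two (J.map (algebraMap R X)) ▸ Ideal.mul_mem_mul hm hn
  rwa [← Ideal.map_pow, hJ, Ideal.map_bot, Ideal.mem_bot] at this

theorem Ideal.isNilpotent_map_of_sq_eq_bot (hJ : J ^ 2 = ⊥) :
    IsNilpotent (J.map (algebraMap R X)) :=
  ⟨2, by rw [← Ideal.map_pow, hJ, Ideal.map_bot, Ideal.zero_eq_bot]⟩

theorem AlgHom.apply_eq_self_of_mem_map (hJ : J ^ 2 = ⊥) (w : X →ₐ[R] X)
    (hw : ∀ x, w x - x ∈ J.map (algebraMap R X)) {m : X} (hm : m ∈ J.map (algebraMap R X)) :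
    w m = m := by
  replace hm : m ∈ J • (⊤ : Submodule R X) := by rwa [Ideal.smul_top_eq_map]
  induction hm using Submodule.smul_induction_on' with
  | smul j hj x =>
    have hjx : j • (w x - x) = 0 := by
      rw [Algebra.smul_def]
      exact Ideal.mul_eq_zero_of_mem_map_of_sq_eq_bot hJ (Ideal.mem_map_of_mem _ hj) (hw x)
    rw [map_smul, ← sub_eq_zero, ← smul_sub, hjx]
  | add x y _ _ hx hy => rw [map_add, hx, hy]

theorem AlgHom.bijective_of_sub_mem_map (hJ : J ^ 2 = ⊥) (w : X →ₐ[R] X)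
    (hw : ∀ x, w x - x ∈ J.map (algebraMap R X)) : Function.Bijective w := by
  -- `δ := w - id` takes values in `JX` and vanishes there, so `id - δ = 2 - w` inverts `w`.
  have hww (x : X) : w (w x) = 2 * w x - x := by
    have := w.apply_eq_self_of_mem_map hJ hw (hw x)
    rw [map_sub] at this
    linear_combination this
  refine Function.bijective_iff_has_inverse.mpr ⟨fun x => 2 * x - w x, fun x => ?_, fun x => ?_⟩
  · simp only [hww]; ring
  · simp only [map_sub, map_mul, map_ofNat, hww]; ring

end

section

variable {R X Y : Type*} [CommRing R] [CommRing X] [CommRing Y] [Algebra R X] [Algebra R Y]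
  {I : Ideal X}

theorem AlgEquiv.surjective_comp_mkₐ (e : (X ⧸ I) ≃ₐ[R] Y) :
    Function.Surjective (e.toAlgHom.comp (Ideal.Quotient.mkₐ R I)) :=
  e.surjective.comp Ideal.Quotient.mk_surjective

theorem AlgEquiv.ker_comp_mkₐ (e : (X ⧸ I) ≃ₐ[R] Y) :
    RingHom.ker (e.toAlgHom.comp (Ideal.Quotient.mkₐ R I)) = I := by
  ext x
  simp [Ideal.Quotient.eq_zero_iff_mem]

end

theorem Algebra.FormallySmooth.of_algHom_of_ker_eq_map_of_flat {B B₀ A₀ A : Type*}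
    [CommRing B] [CommRing B₀] [CommRing A₀] [CommRing A] [Algebra B B₀] [Algebra B₀ A₀]
    [Algebra B A₀] [IsScalarTower B B₀ A₀] [Algebra B A] [Module.Flat B A]
    [Algebra.FormallySmooth B₀ A₀]
    (hsurj : Function.Surjective (algebraMap B B₀))
    (hsq : RingHom.ker (algebraMap B B₀) ^ 2 = ⊥)
    (f : A →ₐ[B] A₀) (hf : Function.Surjective f)
    (hkf : RingHom.ker f = (RingHom.ker (algebraMap B B₀)).map (algebraMap B A)) :
    Algebra.FormallySmooth B A := by
  let := f.toAlgebra
  have : IsScalarTower B A A₀ := IsScalarTower.of_algebraMap_eq fun b => (f.commutes b).symm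
  exact Algebra.FormallySmooth.of_surjective_of_ker_eq_map_of_flat hsurj hf hkf hsq ‹_›

/-- Uniqueness up to isomorphism of liftings: let `J ⊆ B` be a square-zero
ideal, `B₀ = B/J` (realized as a quotient `B → B₀` with kernel `J`), and `A₀` a formally
smooth `B₀`-algebra. If `A` and `A'` are flat `B`-algebras equipped with `B`-algebra
isomorphisms `A/JA ≅ A₀ ≅ A'/JA'` (i.e. two liftings of `A₀` over `B`), then there is a
`B`-algebra isomorphism `g : A ≅ A'` reducing to the identity of `A₀` modulo `J`. -/
theorem lifting_unique_up_to_iso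
    {B : Type*} {B₀ A₀ : Type u} {A A' : Type*}
    [CommRing B] [CommRing B₀] [CommRing A₀] [CommRing A] [CommRing A']
    [Algebra B B₀] [Algebra B₀ A₀] [Algebra B A₀] [IsScalarTower B B₀ A₀]
    [Algebra B A] [Algebra B A']
    (J : Ideal B) (hJ : J ^ 2 = ⊥)
    (hker : RingHom.ker (algebraMap B B₀) = J)
    (hsurj : Function.Surjective (algebraMap B B₀))
    [Module.Flat B A] [Module.Flat B A']
    [Algebra.FormallySmooth B₀ A₀]
    (e : (A ⧸ J.map (algebraMap B A)) ≃ₐ[B] A₀)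
    (e' : (A' ⧸ J.map (algebraMap B A')) ≃ₐ[B] A₀) :
    ∃ g : A ≃ₐ[B] A', ∀ x : A,
      e' (Ideal.Quotient.mk (J.map (algebraMap B A')) (g x))
        = e (Ideal.Quotient.mk (J.map (algebraMap B A)) x) := by
  subst hker
  let f := e.toAlgHom.comp (Ideal.Quotient.mkₐ B _)
  let f' := e'.toAlgHom.comp (Ideal.Quotient.mkₐ B _)
  have : Algebra.FormallySmooth B A :=
    .of_algHom_of_ker_eq_map_of_flat hsurj hJ f e.surjective_comp_mkₐ e.ker_comp_mkₐ
  have : Algebra.FormallySmooth B A' :=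
    .of_algHom_of_ker_eq_map_of_flat hsurj hJ f' e'.surjective_comp_mkₐ e'.ker_comp_mkₐ
  let u := Algebra.FormallySmooth.liftOfSurjective f f' e'.surjective_comp_mkₐ
    (e'.ker_comp_mkₐ ▸ Ideal.isNilpotent_map_of_sq_eq_bot hJ)
  let v := Algebra.FormallySmooth.liftOfSurjective f' f e.surjective_comp_mkₐ
    (e.ker_comp_mkₐ ▸ Ideal.isNilpotent_map_of_sq_eq_bot hJ)
  have hu (x : A) : f' (u x) = f x := Algebra.FormallySmooth.liftOfSurjective_apply ..
  have hv (x : A') : f (v x) = f' x := Algebra.FormallySmooth.liftOfSurjective_apply ..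
  have hvu : Function.Bijective (v.comp u) :=
    AlgHom.bijective_of_sub_mem_map hJ _ fun x => by
      rw [← e.ker_comp_mkₐ, RingHom.mem_ker]
      exact (map_sub f _ _).trans (sub_eq_zero.mpr ((hv _).trans (hu x)))
  have huv : Function.Bijective (u.comp v) :=
    AlgHom.bijective_of_sub_mem_map hJ _ fun x => by
      rw [← e'.ker_comp_mkₐ, RingHom.mem_ker]
      exact (map_sub f' _ _).trans (sub_eq_zero.mpr ((hu _).trans (hv x)))
  exact ⟨.ofBijective u ⟨.of_comp (f := v) hvu.injective, .of_comp (g := v) huv.surjective⟩,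
    hu⟩
end

section
/- Let B be a commutative ring with square-zero ideal J, B₀ = B/J, A₀ a formally smooth B₀-algebra, and A a flat B-algebra lifting A₀ (i.e., A ⊗_B B₀ ≅ A₀). Then the group Aut_{A₀}(A) of B-algebra automorphisms of A inducing the identity on A₀ is isomorphic (as a set, and in fact as a group under composition corresponding to addition) to Hom_{A₀}(Ω¹_{A₀/B₀}, J ⊗_{B₀} A₀), via g ↦ the unique A₀-linear map φ with g = id + φ ∘ d, where d : A → Ω¹_{A₀/B₀} is the composite of the projection A → A₀ with the universal derivation. -/
universe u

section AutLiftingAux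

variable {B : Type*} {B₀ A₀ : Type u} {A : Type*}
    [CommRing B] [CommRing B₀] [CommRing A₀] [CommRing A]
    [Algebra B B₀] [Algebra B₀ A₀] [Algebra B A₀] [IsScalarTower B B₀ A₀]
    [Algebra B A]

set_option linter.unusedSectionVars false

theorem auxL1 (J : Ideal B) (hJ : J ^ 2 = ⊥) :
    ∀ x ∈ J.map (algebraMap B A), ∀ y ∈ J.map (algebraMap B A), x * y = 0 := by
  intro x hx y hy
  have h : J.map (algebraMap B A) * J.map (algebraMap B A) = ⊥ := by
    rw [← Ideal.map_mul, ← pow_two, hJ, Ideal.map_bot]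
  have := Ideal.mul_mem_mul hx hy
  rw [h] at this
  simpa using this

theorem auxL3 (I : Ideal A) (e : (A ⧸ I) ≃ₐ[B] A₀) (b : B) :
    e (Ideal.Quotient.mk I (algebraMap B A b)) = algebraMap B A₀ b :=
  (e.toAlgHom.comp (Ideal.Quotient.mkₐ B I)).commutes b

theorem auxFix (J : Ideal B) (hJ : J ^ 2 = ⊥) (g : A ≃ₐ[B] A)
    (hg : ∀ x : A, Ideal.Quotient.mk (J.map (algebraMap B A)) (g x)
        = Ideal.Quotient.mk (J.map (algebraMap B A)) x) :
    ∀ i ∈ J.map (algebraMap B A), g i = i := by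
  have hmem : ∀ x : A, g x - x ∈ J.map (algebraMap B A) := fun x =>
    Ideal.Quotient.eq.mp (hg x)
  intro i hi
  rw [Ideal.map] at hi
  induction hi using Submodule.span_induction with
  | mem x h =>
      obtain ⟨b, _, rfl⟩ := h
      exact g.commutes b
  | zero => exact map_zero g
  | add x y hx hy ihx ihy => rw [map_add, ihx, ihy]
  | smul a x hx ih =>
      rw [smul_eq_mul, map_mul, ih]
      have hx' : x ∈ J.map (algebraMap B A) := by rwa [Ideal.map]
      have h0 : (g a - a) * x = 0 := auxL1 J hJ _ (hmem a) _ hx'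
      linear_combination h0

/-- Existence of the `A₀`-linear map `φ` attached to an automorphism `g` of the lifting. -/
theorem auxPart1 (I : Ideal A)
    (hI2 : ∀ x ∈ I, ∀ y ∈ I, x * y = 0)
    (hsurj : Function.Surjective (algebraMap B B₀))
    (e : (A ⧸ I) ≃ₐ[B] A₀) (g : A ≃ₐ[B] A)
    (hg : ∀ x : A, Ideal.Quotient.mk I (g x) = Ideal.Quotient.mk I x)
    (hfix : ∀ i ∈ I, g i = i) :
    ∃ φ : KaehlerDifferential B₀ A₀ →+ A,
      (∀ ω, φ ω ∈ I) ∧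
      (∀ (x : A) (ω), φ (e (Ideal.Quotient.mk I x) • ω) = x * φ ω) ∧
      (∀ x : A, g x = x + φ (KaehlerDifferential.D B₀ A₀ (e (Ideal.Quotient.mk I x)))) := by
  have hgsub : ∀ x : A, g x - x ∈ I := fun x => Ideal.Quotient.eq.mp (hg x)
  have hDcoset : ∀ x y : A, Ideal.Quotient.mk I x = Ideal.Quotient.mk I y →
      g x - x = g y - y := by
    intro x y h
    have hxy : x - y ∈ I := Ideal.Quotient.eq.mp h
    have h1 : g x = g y + (x - y) := by
      rw [← hfix _ hxy, ← map_add]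
      norm_num
    rw [h1]; ring
  have hsurj' : Function.Surjective (fun x : A => e (Ideal.Quotient.mk I x)) := by
    intro a₀
    obtain ⟨y, hy⟩ := Ideal.Quotient.mk_surjective (e.symm a₀)
    exact ⟨y, by simp [hy]⟩
  set s : A₀ → A := Function.surjInv hsurj' with hsdef
  have hs : ∀ a₀ : A₀, e (Ideal.Quotient.mk I (s a₀)) = a₀ := fun a₀ =>
    Function.surjInv_eq hsurj' a₀
  have hIdiff : ∀ x y : A, e (Ideal.Quotient.mk I x) = e (Ideal.Quotient.mk I y) →
      x - y ∈ I := fun x y h => Ideal.Quotient.eq.mp (e.injective h)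
  have hmulI : ∀ x y m : A, m ∈ I →
      e (Ideal.Quotient.mk I x) = e (Ideal.Quotient.mk I y) → x * m = y * m := by
    intro x y m hm h
    have h0 : (x - y) * m = 0 := hI2 _ (hIdiff x y h) _ hm
    linear_combination h0
  letI htors : Module.IsTorsionBySet A ↥I (I : Set A) := by
    intro m a
    exact Subtype.ext (hI2 _ a.2 _ m.2)
  letI mQ : Module (A ⧸ I) ↥I := htors.module
  letI mA₀ : Module A₀ ↥I := Module.compHom ↥I (e.symm : A₀ →ₐ[B] A ⧸ I).toRingHom
  letI mB₀ : Module B₀ ↥I := Module.compHom ↥I (algebraMap B₀ A₀)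
  have hsm : ∀ (a₀ : A₀) (m : ↥I), ((a₀ • m : ↥I) : A) = s a₀ * (m : A) := by
    intro a₀ m
    have h1 : e.symm a₀ = Ideal.Quotient.mk I (s a₀) := by
      rw [AlgEquiv.symm_apply_eq]; exact (hs a₀).symm
    show (((e.symm a₀ : A ⧸ I) • m : ↥I) : A) = _
    rw [h1, htors.mk_smul]
    rfl
  have hsmB : ∀ (b₀ : B₀) (m : ↥I), ((b₀ • m : ↥I) : A) = s (algebraMap B₀ A₀ b₀) * (m : A) := by
    intro b₀ m
    exact hsm (algebraMap B₀ A₀ b₀) m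
  haveI tower : IsScalarTower B₀ A₀ ↥I := by
    constructor
    intro b₀ a₀ m
    apply Subtype.ext
    rw [hsm, hsmB, hsm, Algebra.smul_def, ← mul_assoc]
    apply hmulI _ _ _ m.2
    rw [hs, map_mul, map_mul, hs, hs]
  have hmk : ∀ x y : A, e (Ideal.Quotient.mk I x) = e (Ideal.Quotient.mk I y) →
      Ideal.Quotient.mk I x = Ideal.Quotient.mk I y := fun x y h => e.injective h
  let Dbar : Derivation B₀ A₀ ↥I :=
    { toFun := fun a₀ => ⟨g (s a₀) - s a₀, hgsub _⟩
      map_add' := by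
        intro a b
        apply Subtype.ext
        show g (s (a + b)) - s (a + b) = (g (s a) - s a) + (g (s b) - s b)
        rw [hDcoset (s (a + b)) (s a + s b) (hmk _ _ (by simp only [map_add, hs]))]
        rw [map_add]
        ring
      map_smul' := by
        intro b₀ a₀
        obtain ⟨b, hb⟩ := hsurj b₀
        apply Subtype.ext
        show g (s (b₀ • a₀)) - s (b₀ • a₀) = ((b₀ • (⟨g (s a₀) - s a₀, hgsub _⟩ : ↥I) : ↥I) : A)
        rw [hsmB]
        have h1 : e (Ideal.Quotient.mk I (s (b₀ • a₀)))
            = e (Ideal.Quotient.mk I (algebraMap B A b * s a₀)) := by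
          rw [hs, map_mul, map_mul, auxL3 I e b, hs, IsScalarTower.algebraMap_apply B B₀ A₀, hb,
            Algebra.smul_def]
        rw [hDcoset _ _ (hmk _ _ h1)]
        have h2 : g (algebraMap B A b * s a₀) = algebraMap B A b * g (s a₀) := by
          rw [map_mul, AlgEquiv.commutes]
        rw [h2]
        have h3 : s (algebraMap B₀ A₀ b₀) * (g (s a₀) - s a₀)
            = algebraMap B A b * (g (s a₀) - s a₀) := by
          apply hmulI _ _ _ (hgsub _)
          rw [hs, auxL3 I e b, IsScalarTower.algebraMap_apply B B₀ A₀, hb]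
        rw [h3]
        ring
      map_one_eq_zero' := by
        apply Subtype.ext
        show g (s 1) - s 1 = 0
        rw [hDcoset (s 1) 1 (hmk _ _ (by simp only [map_one, hs]))]
        simp
      leibniz' := by
        intro a b
        apply Subtype.ext
        show g (s (a * b)) - s (a * b)
          = ((a • (⟨g (s b) - s b, hgsub _⟩ : ↥I) + b • (⟨g (s a) - s a, hgsub _⟩ : ↥I) : ↥I) : A)
        rw [Submodule.coe_add, hsm, hsm]
        rw [hDcoset (s (a * b)) (s a * s b) (hmk _ _ (by simp only [map_mul, hs]))]
        have hm : g (s a * s b) = g (s a) * g (s b) := map_mul g _ _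
        have h0 : (g (s a) - s a) * (g (s b) - s b) = 0 := hI2 _ (hgsub _) _ (hgsub _)
        linear_combination hm + h0 }
  let φ₀ := Dbar.liftKaehlerDifferential
  refine ⟨{ toFun := fun ω => ((φ₀ ω : ↥I) : A)
            map_zero' := by simp
            map_add' := by simp }, fun ω => (φ₀ ω).2, ?_, ?_⟩
  · intro x ω
    show ((φ₀ (e (Ideal.Quotient.mk I x) • ω) : ↥I) : A) = x * ((φ₀ ω : ↥I) : A)
    rw [map_smul, hsm]
    exact hmulI _ _ _ (φ₀ ω).2 (hs _)
  · intro x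
    show g x = x + ((φ₀ (KaehlerDifferential.D B₀ A₀ (e (Ideal.Quotient.mk I x))) : ↥I) : A)
    rw [Derivation.liftKaehlerDifferential_comp_D]
    show g x = x + (g (s (e (Ideal.Quotient.mk I x))) - s (e (Ideal.Quotient.mk I x)))
    rw [hDcoset _ x (hmk _ _ (hs _))]
    ring

/-- Uniqueness of `φ`. -/
theorem auxUniq (I : Ideal A) (e : (A ⧸ I) ≃ₐ[B] A₀) (g : A ≃ₐ[B] A)
    (φ φ' : KaehlerDifferential B₀ A₀ →+ A)
    (hsc : ∀ (x : A) (ω), φ (e (Ideal.Quotient.mk I x) • ω) = x * φ ω)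
    (heq : ∀ x : A, g x = x + φ (KaehlerDifferential.D B₀ A₀ (e (Ideal.Quotient.mk I x))))
    (hsc' : ∀ (x : A) (ω), φ' (e (Ideal.Quotient.mk I x) • ω) = x * φ' ω)
    (heq' : ∀ x : A, g x = x + φ' (KaehlerDifferential.D B₀ A₀ (e (Ideal.Quotient.mk I x)))) :
    φ = φ' := by
  have hsurj' : ∀ a₀ : A₀, ∃ y : A, e (Ideal.Quotient.mk I y) = a₀ := by
    intro a₀
    obtain ⟨y, hy⟩ := Ideal.Quotient.mk_surjective (e.symm a₀)
    exact ⟨y, by simp [hy]⟩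
  ext ω
  have hω : ω ∈ Submodule.span A₀ (Set.range (KaehlerDifferential.D B₀ A₀)) := by
    rw [KaehlerDifferential.span_range_derivation]; trivial
  induction hω using Submodule.span_induction with
  | mem x h =>
      obtain ⟨a₀, rfl⟩ := h
      obtain ⟨y, rfl⟩ := hsurj' a₀
      have h1 : φ (KaehlerDifferential.D B₀ A₀ (e (Ideal.Quotient.mk I y))) = g y - y := by
        rw [heq y]; ring
      have h2 : φ' (KaehlerDifferential.D B₀ A₀ (e (Ideal.Quotient.mk I y))) = g y - y := by
        rw [heq' y]; ring
      rw [h1, h2]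
  | zero => simp
  | add x y hx hy ihx ihy => rw [map_add, map_add, ihx, ihy]
  | smul a₀ x hx ih =>
      obtain ⟨y, rfl⟩ := hsurj' a₀
      rw [hsc, hsc', ih]

/-- Construction of the algebra endomorphism `id + φ ∘ d`. -/
theorem auxBuild (J : Ideal B) (hJ : J ^ 2 = ⊥)
    (e : (A ⧸ J.map (algebraMap B A)) ≃ₐ[B] A₀)
    (φ : KaehlerDifferential B₀ A₀ →+ A)
    (hmem : ∀ ω, φ ω ∈ J.map (algebraMap B A))
    (hsc : ∀ (x : A) (ω), φ (e (Ideal.Quotient.mk (J.map (algebraMap B A)) x) • ω)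
        = x * φ ω) :
    ∃ F : A →ₐ[B] A, ∀ x : A, F x = x
        + φ (KaehlerDifferential.D B₀ A₀ (e (Ideal.Quotient.mk (J.map (algebraMap B A)) x))) := by
  refine ⟨{ toFun := fun x => x + φ (KaehlerDifferential.D B₀ A₀
              (e (Ideal.Quotient.mk (J.map (algebraMap B A)) x)))
            map_one' := ?_
            map_mul' := ?_
            map_zero' := ?_
            map_add' := ?_
            commutes' := ?_ }, fun x => rfl⟩
  · simp
  · intro x y
    show x * y + _ = _
    simp only [map_mul]
    rw [Derivation.leibniz, map_add, hsc, hsc]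
    have h0 : φ (KaehlerDifferential.D B₀ A₀ (e (Ideal.Quotient.mk (J.map (algebraMap B A)) x)))
        * φ (KaehlerDifferential.D B₀ A₀ (e (Ideal.Quotient.mk (J.map (algebraMap B A)) y))) = 0 :=
      auxL1 J hJ _ (hmem _) _ (hmem _)
    linear_combination -h0
  · simp
  · intro x y
    show x + y + _ = _
    simp only [map_add]
    ring
  · intro b
    show algebraMap B A b + _ = _
    rw [auxL3 _ e b, IsScalarTower.algebraMap_apply B B₀ A₀, Derivation.map_algebraMap,
      map_zero, add_zero]

/-- Construction of the automorphism attached to `φ`. -/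
theorem auxPart2 (J : Ideal B) (hJ : J ^ 2 = ⊥)
    (e : (A ⧸ J.map (algebraMap B A)) ≃ₐ[B] A₀)
    (φ : KaehlerDifferential B₀ A₀ →+ A)
    (hmem : ∀ ω, φ ω ∈ J.map (algebraMap B A))
    (hsc : ∀ (x : A) (ω), φ (e (Ideal.Quotient.mk (J.map (algebraMap B A)) x) • ω)
        = x * φ ω) :
    ∃ g : A ≃ₐ[B] A,
      (∀ x : A, Ideal.Quotient.mk (J.map (algebraMap B A)) (g x)
          = Ideal.Quotient.mk (J.map (algebraMap B A)) x) ∧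
      (∀ x : A, g x = x + φ (KaehlerDifferential.D B₀ A₀
          (e (Ideal.Quotient.mk (J.map (algebraMap B A)) x)))) := by
  obtain ⟨F, hF⟩ := auxBuild J hJ e φ hmem hsc
  have hmem' : ∀ ω, (-φ) ω ∈ J.map (algebraMap B A) := fun ω => by
    simpa using neg_mem (hmem ω)
  have hsc' : ∀ (x : A) (ω), (-φ) (e (Ideal.Quotient.mk (J.map (algebraMap B A)) x) • ω)
      = x * (-φ) ω := by
    intro x ω
    simp [AddMonoidHom.neg_apply, hsc, mul_neg]
  obtain ⟨G, hG⟩ := auxBuild J hJ e (-φ) hmem' hsc'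
  have hmkF : ∀ (H : A →ₐ[B] A) (ψ : KaehlerDifferential B₀ A₀ →+ A),
      (∀ ω, ψ ω ∈ J.map (algebraMap B A)) →
      (∀ x : A, H x = x + ψ (KaehlerDifferential.D B₀ A₀
          (e (Ideal.Quotient.mk (J.map (algebraMap B A)) x)))) →
      ∀ x : A, Ideal.Quotient.mk (J.map (algebraMap B A)) (H x)
          = Ideal.Quotient.mk (J.map (algebraMap B A)) x := by
    intro H ψ hψ hH x
    rw [hH x, map_add, Ideal.Quotient.eq_zero_iff_mem.mpr (hψ _), add_zero]
  have hFG : ∀ x : A, F (G x) = x := by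
    intro x
    rw [hF (G x)]
    have h1 : Ideal.Quotient.mk (J.map (algebraMap B A)) (G x)
        = Ideal.Quotient.mk (J.map (algebraMap B A)) x := hmkF G (-φ) hmem' hG x
    rw [h1, hG x]
    simp
  have hGF : ∀ x : A, G (F x) = x := by
    intro x
    rw [hG (F x)]
    have h1 : Ideal.Quotient.mk (J.map (algebraMap B A)) (F x)
        = Ideal.Quotient.mk (J.map (algebraMap B A)) x := hmkF F φ hmem hF x
    rw [h1, hF x]
    simp
  refine ⟨AlgEquiv.ofAlgHom F G (AlgHom.ext hFG) (AlgHom.ext hGF), ?_, ?_⟩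
  · intro x
    exact hmkF F φ hmem hF x
  · intro x
    exact hF x

end AutLiftingAux

/-- Automorphisms of a lifting: with `J ⊆ B` square-zero, `B₀ = B/J`,
`A₀` a formally smooth `B₀`-algebra, and `A` a flat `B`-algebra lifting `A₀`
(via `e : A/JA ≅ A₀`), the group of `B`-algebra automorphisms of `A` inducing the identity
on `A₀` is in bijection with `Hom_{A₀}(Ω¹_{A₀/B₀}, JA (≅ J ⊗_{B₀} A₀))`, via
`g ↦ φ` with `g = id + φ ∘ d` (where `d` is the projection `A → A₀` followed by the
universal derivation), and composition of automorphisms corresponds to addition. -/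
theorem aut_of_lifting_eq_hom_kaehler
    {B : Type*} {B₀ A₀ : Type u} {A : Type*}
    [CommRing B] [CommRing B₀] [CommRing A₀] [CommRing A]
    [Algebra B B₀] [Algebra B₀ A₀] [Algebra B A₀] [IsScalarTower B B₀ A₀]
    [Algebra B A]
    (J : Ideal B) (hJ : J ^ 2 = ⊥)
    (hker : RingHom.ker (algebraMap B B₀) = J)
    (hsurj : Function.Surjective (algebraMap B B₀))
    [Module.Flat B A] [Algebra.FormallySmooth B₀ A₀]
    (e : (A ⧸ J.map (algebraMap B A)) ≃ₐ[B] A₀) :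
    (∀ g : A ≃ₐ[B] A,
      (∀ x : A, Ideal.Quotient.mk (J.map (algebraMap B A)) (g x)
          = Ideal.Quotient.mk (J.map (algebraMap B A)) x) →
      ∃! φ : KaehlerDifferential B₀ A₀ →+ A,
        (∀ ω, φ ω ∈ J.map (algebraMap B A)) ∧
        (∀ (x : A) (ω), φ (e (Ideal.Quotient.mk (J.map (algebraMap B A)) x) • ω)
            = x * φ ω) ∧
        (∀ x : A, g x = x
            + φ (KaehlerDifferential.D B₀ A₀
                (e (Ideal.Quotient.mk (J.map (algebraMap B A)) x))))) ∧
    (∀ φ : KaehlerDifferential B₀ A₀ →+ A,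
      (∀ ω, φ ω ∈ J.map (algebraMap B A)) →
      (∀ (x : A) (ω), φ (e (Ideal.Quotient.mk (J.map (algebraMap B A)) x) • ω)
          = x * φ ω) →
      ∃ g : A ≃ₐ[B] A,
        (∀ x : A, Ideal.Quotient.mk (J.map (algebraMap B A)) (g x)
            = Ideal.Quotient.mk (J.map (algebraMap B A)) x) ∧
        (∀ x : A, g x = x
            + φ (KaehlerDifferential.D B₀ A₀
                (e (Ideal.Quotient.mk (J.map (algebraMap B A)) x))))) ∧
    (∀ (g h : A ≃ₐ[B] A) (φ ψ : KaehlerDifferential B₀ A₀ →+ A),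
      (∀ x : A, g x = x
          + φ (KaehlerDifferential.D B₀ A₀
              (e (Ideal.Quotient.mk (J.map (algebraMap B A)) x)))) →
      (∀ ω, φ ω ∈ J.map (algebraMap B A)) →
      (∀ x : A, h x = x
          + ψ (KaehlerDifferential.D B₀ A₀
              (e (Ideal.Quotient.mk (J.map (algebraMap B A)) x)))) →
      (∀ ω, ψ ω ∈ J.map (algebraMap B A)) →
      ∀ x : A, g (h x) = x
          + (φ + ψ) (KaehlerDifferential.D B₀ A₀
              (e (Ideal.Quotient.mk (J.map (algebraMap B A)) x)))) := by
  refine ⟨?_, ?_, ?_⟩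
  · intro g hg
    obtain ⟨φ, h1, h2, h3⟩ := auxPart1 (J.map (algebraMap B A)) (auxL1 J hJ) hsurj e g hg
      (auxFix J hJ g hg)
    exact ⟨φ, ⟨h1, h2, h3⟩, fun φ' ⟨h1', h2', h3'⟩ => auxUniq _ e g φ' φ h2' h3' h2 h3⟩
  · intro φ hmem hsc
    exact auxPart2 J hJ e φ hmem hsc
  · intro g h φ ψ hgφ hφmem hhψ hψmem x
    have h1 : Ideal.Quotient.mk (J.map (algebraMap B A)) (h x)
        = Ideal.Quotient.mk (J.map (algebraMap B A)) x := by
      rw [hhψ x, map_add, Ideal.Quotient.eq_zero_iff_mem.mpr (hψmem _), add_zero]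
    rw [hgφ (h x), h1, hhψ x, AddMonoidHom.add_apply]
    ring
end
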